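/- Let Γ be a finite two-player zero-sum game with value v and let α = (α_1, α_2) be a profile of deviation plans. If for every player i ∈ {1,2} and every pure strategy c_i ∈ C_i, the mixed strategy α_i*c_i is an optimal strategy of player i, then α is a dual vector of Γ. -/

import Mathlib

open scoped BigOperators

section Prelim

variable {S : Type} [Fintype S] [DecidableEq S]

/-- `σ` is a mixed strategy (probability distribution) on the finite set `S`. -/
def IsMixed (σ : S → ℝ) : Prop := (∀ s, 0 ≤ σ s) ∧ ∑ s, σ s = 1

/-- The Dirac measure `δ_s`. -/
def dirac (s : S) : S → ℝ := fun d => if d = s then 1 else 0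

/-- `α_i * σ_i`, the image of the mixed strategy `σ` under the deviation plan `αᵢ`,
where `αᵢ c d` is the probability `αᵢ(d | c)`. -/
def devImage (αᵢ : S → S → ℝ) (σ : S → ℝ) : S → ℝ := fun d => ∑ c, σ c * αᵢ c d

/-- `σ` is `αᵢ`-stationary: `αᵢ * σ = σ`. -/
def IsStationaryDev (αᵢ : S → S → ℝ) (σ : S → ℝ) : Prop := devImage αᵢ σ = σ

/-- A nonempty `B ⊆ S` is `αᵢ`-absorbing if `supp (αᵢ * c) ⊆ B` for all `c ∈ B`. -/
def IsAbsorbing (αᵢ : S → S → ℝ) (B : Finset S) : Prop :=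
  B.Nonempty ∧ ∀ c ∈ B, ∀ d, 0 < αᵢ c d → d ∈ B

/-- A minimal absorbing set: an absorbing set containing no proper nonempty absorbing subset. -/
def IsMinimalAbsorbing (αᵢ : S → S → ℝ) (B : Finset S) : Prop :=
  IsAbsorbing αᵢ B ∧ ∀ B' ⊆ B, IsAbsorbing αᵢ B' → B' = B

/-- `C_i/α_i`: the set of `αᵢ`-stationary mixed strategies whose support is contained
in some minimal `αᵢ`-absorbing set. -/
def ReducedSet (αᵢ : S → S → ℝ) : Set (S → ℝ) :=
  {σ | IsMixed σ ∧ IsStationaryDev αᵢ σ ∧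
    ∃ B : Finset S, IsMinimalAbsorbing αᵢ B ∧ ∀ s, σ s ≠ 0 → s ∈ B}

end Prelim

section Bimatrix

variable {S T : Type} [Fintype S] [Fintype T] [DecidableEq S] [DecidableEq T]

/-- `D(c, α)` for the two-player zero-sum game with payoff `u` to player 1 (and `-u`
to player 2), at the pure strategy profile `(s, t)`. -/
def devGain2 (u : S → T → ℝ) (α₁ : S → S → ℝ) (α₂ : T → T → ℝ) (s : S) (t : T) : ℝ :=
  ((∑ s', α₁ s s' * u s' t) - u s t) + ((∑ t', α₂ t t' * (-(u s t'))) - (-(u s t)))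

/-- A dual vector of the two-player zero-sum game with payoff `u` to player 1. -/
def IsDualVector2 (u : S → T → ℝ) (α₁ : S → S → ℝ) (α₂ : T → T → ℝ) : Prop :=
  (∀ s, IsMixed (α₁ s)) ∧ (∀ t, IsMixed (α₂ t)) ∧ ∀ s t, 0 ≤ devGain2 u α₁ α₂ s t

/-- Correlated equilibrium of the two-player zero-sum game with payoff `u` to player 1. -/
def IsCorrelatedEq2 (u : S → T → ℝ) (μ : S → T → ℝ) : Prop :=
  (∀ s t, 0 ≤ μ s t) ∧ (∑ s, ∑ t, μ s t) = 1 ∧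
  (∀ s s' : S, ∑ t, μ s t * (u s' t - u s t) ≤ 0) ∧
  (∀ t t' : T, ∑ s, μ s t * ((-(u s t')) - (-(u s t))) ≤ 0)

/-- A full dual vector of the two-player zero-sum game with payoff `u` to player 1. -/
def IsFull2 (u : S → T → ℝ) (α₁ : S → S → ℝ) (α₂ : T → T → ℝ) : Prop :=
  (∀ s s', (∃ (β₁ : S → S → ℝ) (β₂ : T → T → ℝ),
      IsDualVector2 u β₁ β₂ ∧ 0 < β₁ s s') → 0 < α₁ s s') ∧
  (∀ t t', (∃ (β₁ : S → S → ℝ) (β₂ : T → T → ℝ),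
      IsDualVector2 u β₁ β₂ ∧ 0 < β₂ t t') → 0 < α₂ t t')

end Bimatrix

theorem devGain2_eq_sub {S T : Type} [Fintype S] [Fintype T] (u : S → T → ℝ)
    (α₁ : S → S → ℝ) (α₂ : T → T → ℝ) (s : S) (t : T) :
    devGain2 u α₁ α₂ s t = ∑ s', α₁ s s' * u s' t - ∑ t', α₂ t t' * u s t' := by
  simp only [devGain2, mul_neg, Finset.sum_neg_distrib]
  ring

theorem optimal_deviation_plans_are_dual_vector_general
    {S T : Type} [Fintype S] [Fintype T]
    (u : S → T → ℝ) (v : ℝ)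
    (α₁ : S → S → ℝ) (α₂ : T → T → ℝ)
    (h₁ : ∀ s, IsMixed (α₁ s) ∧ ∀ t, v ≤ ∑ s', α₁ s s' * u s' t)
    (h₂ : ∀ t, IsMixed (α₂ t) ∧ ∀ s, ∑ t', α₂ t t' * u s t' ≤ v) :
    IsDualVector2 u α₁ α₂ := by
  refine ⟨fun s => (h₁ s).1, fun t => (h₂ t).1, fun s t => ?_⟩
  rw [devGain2_eq_sub, sub_nonneg]
  exact ((h₂ t).2 s).trans ((h₁ s).2 t)

/-- In a two-player zero-sum game with value `v`, any profile of deviation plans mapping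
every pure strategy to an optimal mixed strategy is a dual vector. -/
theorem optimal_deviation_plans_are_dual_vector
    {S T : Type} [Fintype S] [Fintype T] [DecidableEq S] [DecidableEq T]
    [Nonempty S] [Nonempty T]
    (u : S → T → ℝ) (v : ℝ)
    (hval₁ : ∃ σ₁ : S → ℝ, IsMixed σ₁ ∧ ∀ t, v ≤ ∑ s, σ₁ s * u s t)
    (hval₂ : ∃ σ₂ : T → ℝ, IsMixed σ₂ ∧ ∀ s, ∑ t, σ₂ t * u s t ≤ v)
    (α₁ : S → S → ℝ) (α₂ : T → T → ℝ)
    (h₁ : ∀ s, IsMixed (α₁ s) ∧ ∀ t, v ≤ ∑ s', α₁ s s' * u s' t)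
    (h₂ : ∀ t, IsMixed (α₂ t) ∧ ∀ s, ∑ t', α₂ t t' * u s t' ≤ v) :
    IsDualVector2 u α₁ α₂ :=
  optimal_deviation_plans_are_dual_vector_general u v α₁ α₂ h₁ h₂
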